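/- The inverse Φ_{m,r} of Q_{m,r} satisfies Φ_{m,r}(1 + 2x) = -r/m + (2/m)·Φ_{m,r}(x) for all x ∈ ℤ₂, where 1/m denotes the inverse of m in ℤ₂. -/

import Mathlib

open scoped Classical

lemma padic_zero_of_dvd (a : ℤ_[2]) (h : ∀ k : ℕ, (2 ^ k : ℤ_[2]) ∣ a) : a = 0 := by
  by_contra ha
  have hpos : 0 < ‖a‖ := by simpa [norm_pos_iff] using ha
  obtain ⟨k, hk⟩ := exists_pow_lt_of_lt_one hpos (by norm_num : (1/2 : ℝ) < 1)
  have hdvd : ((2 : ℕ) : ℤ_[2]) ^ k ∣ a := by exact_mod_cast h k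
  have hle' := (PadicInt.norm_le_pow_iff_mem_span_pow a k).mpr
    (Ideal.mem_span_singleton.mpr hdvd)
  have hle : ‖a‖ ≤ (2 : ℝ) ^ (-(k : ℤ)) := by
    convert hle' using 2
    norm_num
  have heq : (2 : ℝ) ^ (-(k : ℤ)) = (1/2 : ℝ) ^ k := by
    rw [zpow_neg, one_div, inv_pow]
    norm_num
  rw [heq] at hle
  linarith

lemma key_rec (T Q : ℤ_[2] → ℤ_[2])
    (hQ : ∀ x (k : ℕ), (2 ^ k : ℤ_[2]) ∣
      (Q x - ∑ i ∈ Finset.range k, (if (2 : ℤ_[2]) ∣ T^[i] x then 0 else 1) * 2 ^ i)) :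
    ∀ z, Q z = (if (2 : ℤ_[2]) ∣ z then 0 else 1) + 2 * Q (T z) := by
  intro z
  have h : ∀ k : ℕ, (2 ^ k : ℤ_[2]) ∣
      (Q z - ((if (2 : ℤ_[2]) ∣ z then 0 else 1) + 2 * Q (T z))) := by
    intro k
    have h1 := hQ z (k + 1)
    have h2 := hQ (T z) k
    have hsum : (∑ i ∈ Finset.range (k+1),
          (if (2 : ℤ_[2]) ∣ T^[i] z then 0 else 1) * 2 ^ i : ℤ_[2])
        = (if (2 : ℤ_[2]) ∣ z then 0 else 1)
          + 2 * ∑ i ∈ Finset.range k, (if (2 : ℤ_[2]) ∣ T^[i] (T z) then 0 else 1) * 2 ^ i := by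
      rw [Finset.sum_range_succ']
      simp only [Function.iterate_succ_apply, Function.iterate_zero_apply, pow_zero, mul_one]
      rw [Finset.mul_sum, add_comm]
      congr 1
      exact Finset.sum_congr rfl fun i _ => by ring_nf; congr
    rw [hsum] at h1
    have h2' : (2 ^ (k+1) : ℤ_[2]) ∣ 2 * (Q (T z)
        - ∑ i ∈ Finset.range k, (if (2 : ℤ_[2]) ∣ T^[i] (T z) then 0 else 1) * 2 ^ i) := by
      rw [pow_succ, mul_comm]
      exact mul_dvd_mul_left 2 h2
    have hd := dvd_sub h1 h2'
    have hk : (2 ^ k : ℤ_[2]) ∣ (2 ^ (k+1) : ℤ_[2]) := pow_dvd_pow 2 (Nat.le_succ k)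
    refine hk.trans ?_
    convert hd using 1
    ring
  have h0 := padic_zero_of_dvd _ h
  linear_combination h0

/-- `Φ_{m,r}(1 + 2x) = -r/m + (2/m)·Φ_{m,r}(x)`, stated multiplied
through by the unit `m`. -/
theorem stmt6 (m r : ℤ) (hm : Odd m) (hr : Odd r)
    (T Q Φ : ℤ_[2] → ℤ_[2])
    (hT : ∀ x, 2 * T x = if (2 : ℤ_[2]) ∣ x then x else (m : ℤ_[2]) * x + (r : ℤ_[2]))
    (hQ : ∀ x (k : ℕ), (2 ^ k : ℤ_[2]) ∣
      (Q x - ∑ i ∈ Finset.range k, (if (2 : ℤ_[2]) ∣ T^[i] x then 0 else 1) * 2 ^ i))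
    (hΦl : Function.LeftInverse Φ Q) (hΦr : Function.RightInverse Φ Q) :
    ∀ x, (m : ℤ_[2]) * Φ (1 + 2 * x) = -(r : ℤ_[2]) + 2 * Φ x := by
  intro x
  set y := Φ (1 + 2 * x) with hy
  have hQy : Q y = 1 + 2 * x := hΦr (1 + 2 * x)
  have hrec := key_rec T Q hQ y
  have hodd : ¬ (2 : ℤ_[2]) ∣ y := by
    intro h
    rw [if_pos h] at hrec
    have h1 : (2 : ℤ_[2]) ∣ 1 := ⟨Q (T y) - x, by linear_combination hQy.symm.trans hrec⟩
    have := (PadicInt.norm_lt_one_iff_dvd (1 : ℤ_[2])).mpr (by exact_mod_cast h1)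
    simp at this
  rw [if_neg hodd] at hrec
  have h2ne : (2 : ℤ_[2]) ≠ 0 := two_ne_zero
  have hQTy : Q (T y) = x := by
    have h2 : (2 : ℤ_[2]) * Q (T y) = 2 * x := by
      linear_combination -(hQy.symm.trans hrec)
    exact mul_left_cancel₀ h2ne h2
  have hTy : T y = Φ x := by
    have := hΦl (T y)
    rw [hQTy] at this
    exact this.symm
  have hTyval := hT y
  rw [if_neg hodd, hTy] at hTyval
  linear_combination -hTyval
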